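/- Let (Z_t)_{t≥0} be a continuous submartingale with Doob–Meyer decomposition Z_t = M_t + A_t, where M is a continuous martingale with M_0 = 0 and A a continuous increasing process with A_0 = 0. Then for every p > 1, E[A_∞^p] ≤ (2p)^p E[sup_{t≥0}|Z_t|^p]. -/

import Mathlib

open MeasureTheory Real Set Filter Topology Finset
open scoped ENNReal NNReal

lemma rpow_sub_rpow_le {x y p : ℝ} (hy : 0 ≤ y) (hyx : y ≤ x) (hp : 1 ≤ p) :
    x ^ p - y ^ p ≤ p * x ^ (p - 1) * (x - y) := by
  have hx : 0 ≤ x := hy.trans hyx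
  rcases eq_or_lt_of_le hx with h0 | hxpos
  · have hy0 : y = 0 := le_antisymm (hyx.trans h0.ge) hy
    simp [← h0, hy0]
  · have hs : -1 ≤ y / x - 1 := by
      have : 0 ≤ y / x := div_nonneg hy hx
      linarith
    have hb := one_add_mul_self_le_rpow_one_add hs hp
    have h1 : (1 : ℝ) + (y / x - 1) = y / x := by ring
    rw [h1] at hb
    have h2 : (y / x) ^ p = y ^ p / x ^ p := Real.div_rpow hy hx p
    rw [h2] at hb
    have hxp : 0 < x ^ p := Real.rpow_pos_of_pos hxpos p
    have hb2 : (1 + p * (y / x - 1)) * x ^ p ≤ y ^ p := (le_div_iff₀ hxp).mp hb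
    have hxp1 : x ^ p = x ^ (p - 1) * x := by
      have h := Real.rpow_add hxpos (p - 1) 1
      rw [Real.rpow_one] at h
      rw [← h]; norm_num
    have e1 : y / x * x ^ p = x ^ (p - 1) * y := by
      rw [hxp1]; field_simp
    have hb3 : x ^ p + p * (x ^ (p - 1) * y) - p * (x ^ (p - 1) * x) ≤ y ^ p := by
      have hexp : (1 + p * (y / x - 1)) * x ^ p = x ^ p + p * (y / x * x ^ p) - p * x ^ p := by
        ring
      rw [hexp, e1] at hb2
      nth_rewrite 2 [hxp1] at hb2
      linarith
    have goal' : p * x ^ (p - 1) * (x - y) = p * (x ^ (p - 1) * x) - p * (x ^ (p - 1) * y) := by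
      ring
    rw [goal']
    linarith

lemma abel_sum (a b : ℕ → ℝ) (ha : a 0 = 0) (hb : b 0 = 0) (n : ℕ) :
    ∑ i ∈ range n, b (i+1) * (a (i+1) - a i) = ∑ i ∈ range n, (a n - a i) * (b (i+1) - b i) := by
  have h1 := Finset.sum_range_sub (fun i => a i * b i) n
  have h2 := Finset.sum_range_sub b n
  have key : ∑ i ∈ range n, (b (i+1) * (a (i+1) - a i) - (a n - a i) * (b (i+1) - b i))
      = ∑ i ∈ range n, ((a (i+1) * b (i+1) - a i * b i) - a n * (b (i+1) - b i)) := by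
    refine Finset.sum_congr rfl fun i _ => by ring
  rw [Finset.sum_sub_distrib, Finset.sum_sub_distrib, h1, ← Finset.mul_sum, h2] at key
  simp only [ha, hb] at key
  linarith

lemma discrete_garsia (a : ℕ → ℝ) (ha0 : a 0 = 0) (hmono : Monotone a) {p : ℝ} (hp : 1 < p) (n : ℕ) :
    a n ^ p ≤ p * ∑ i ∈ range n, (a n - a i) * (a (i+1) ^ (p-1) - a i ^ (p-1)) := by
  have hnn : ∀ i, 0 ≤ a i := fun i => ha0 ▸ hmono (Nat.zero_le i)
  have h1 : a n ^ p = ∑ i ∈ range n, (a (i+1) ^ p - a i ^ p) := by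
    rw [Finset.sum_range_sub (fun i => a i ^ p), ha0, Real.zero_rpow (by linarith), sub_zero]
  have h2 : ∀ i ∈ range n, a (i+1) ^ p - a i ^ p ≤ p * (a (i+1) ^ (p-1) * (a (i+1) - a i)) := by
    intro i _
    have h := rpow_sub_rpow_le (hnn i) (hmono (Nat.le_succ i)) hp.le (x := a (i+1))
    linarith
  have hb0 : (fun i => a i ^ (p-1)) 0 = 0 := by
    simp [ha0, Real.zero_rpow (show p - 1 ≠ 0 by linarith)]
  calc a n ^ p ≤ ∑ i ∈ range n, p * (a (i+1) ^ (p-1) * (a (i+1) - a i)) := by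
        rw [h1]; exact Finset.sum_le_sum h2
    _ = p * ∑ i ∈ range n, (a (i+1)) ^ (p-1) * (a (i+1) - a i) := by rw [Finset.mul_sum]
    _ = p * ∑ i ∈ range n, (a n - a i) * (a (i+1) ^ (p-1) - a i ^ (p-1)) := by
        rw [abel_sum a (fun i => a i ^ (p-1)) ha0 hb0]

lemma sup_eq_rat_sup (f : ℝ≥0 → ℝ) (hf : Continuous f) :
    ⨆ t, ENNReal.ofReal |f t| = ⨆ q : ℚ, ENNReal.ofReal |f (Real.toNNReal q)| := by
  apply le_antisymm
  · refine iSup_le fun t => ?_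
    have hex : ∀ n : ℕ, ∃ q : ℚ, (t : ℝ) < q ∧ (q : ℝ) < (t : ℝ) + 1 / (n + 1) := by
      intro n
      exact exists_rat_btwn (lt_add_of_pos_right _ (by positivity))
    choose qs hqs using hex
    have h' : Tendsto (fun n => ((qs n : ℝ))) atTop (𝓝 (t : ℝ)) := by
      apply tendsto_of_tendsto_of_tendsto_of_le_of_le (g := fun _ : ℕ => (t:ℝ))
        (h := fun n : ℕ => (t:ℝ) + 1 / (n + 1))
      · exact tendsto_const_nhds
      · have : Tendsto (fun n : ℕ => 1 / ((n:ℝ) + 1)) atTop (𝓝 0) :=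
          tendsto_one_div_add_atTop_nhds_zero_nat
        simpa using tendsto_const_nhds.add this
      · exact fun n => (hqs n).1.le
      · exact fun n => (hqs n).2.le
    have htend : Tendsto (fun n => Real.toNNReal (qs n)) atTop (𝓝 t) := by
      have h2 := (continuous_real_toNNReal.tendsto ((t : ℝ))).comp h'
      rwa [Real.toNNReal_coe] at h2
    have hlim : Tendsto (fun n => ENNReal.ofReal |f (Real.toNNReal (qs n))|) atTop
        (𝓝 (ENNReal.ofReal |f t|)) :=
      ((ENNReal.continuous_ofReal.comp (continuous_abs.comp hf)).tendsto t).comp htend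
    exact le_of_tendsto hlim (Eventually.of_forall fun n =>
      le_iSup (fun q : ℚ => ENNReal.ofReal |f (Real.toNNReal q)|) (qs n))
  · exact iSup_le fun q => le_iSup (fun t => ENNReal.ofReal |f t|) _

lemma min_sub_min_le {x y c : ℝ} (hyx : y ≤ x) : min x c - min y c ≤ x - y := by
  rcases le_total x c with h | h <;> rcases le_total y c with h' | h' <;>
    simp [min_eq_left, min_eq_right, *] <;> linarith

lemma cond_step {Ω : Type*} {m0 : MeasurableSpace Ω} (μ : Measure Ω) [IsProbabilityMeasure μ]
    (ℱ : Filtration ℝ≥0 m0) (Z M A : ℝ≥0 → Ω → ℝ)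
    (hZ : Submartingale Z ℱ μ) (hM : Martingale M ℱ μ)
    (hdecomp : ∀ t ω, Z t ω = M t ω + A t ω)
    (S : Ω → ℝ) (hS : Integrable S μ)
    (hbound : ∀ᵐ ω ∂μ, ∀ t, |Z t ω| ≤ S ω)
    (s T : ℝ≥0) (hsT : s ≤ T) (φ : Ω → ℝ) (hφ : StronglyMeasurable[ℱ s] φ)
    (hφ0 : ∀ ω, 0 ≤ φ ω) (c' : ℝ) (hφb : ∀ ω, φ ω ≤ c') :
    ∫ ω, φ ω * (A T ω - A s ω) ∂μ ≤ 2 * ∫ ω, φ ω * S ω ∂μ := by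
  have hm : ℱ s ≤ m0 := ℱ.le s
  have hφm0 : AEStronglyMeasurable φ μ := (hφ.mono hm).aestronglyMeasurable
  have hφnorm : ∀ ω, ‖φ ω‖ ≤ c' := fun ω => by
    rw [Real.norm_eq_abs, abs_of_nonneg (hφ0 ω)]; exact hφb ω
  have hφbound : ∀ᵐ ω ∂μ, ‖φ ω‖ ≤ c' := Eventually.of_forall hφnorm
  have Iprod : ∀ (f : Ω → ℝ), Integrable f μ → Integrable (fun ω => φ ω * f ω) μ :=
    fun f hf => hf.bdd_mul hφm0 hφbound
  -- ∫ φ * M T = ∫ φ * M s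
  have hMT : ∫ ω, φ ω * M T ω ∂μ = ∫ ω, φ ω * M s ω ∂μ := by
    have h1 : μ[fun ω => φ ω * M T ω | ℱ s] =ᵐ[μ] fun ω => φ ω * (μ[M T | ℱ s]) ω :=
      condExp_stronglyMeasurable_mul_of_bound hm hφ (hM.integrable T) c' hφbound
    have h2 : μ[M T | ℱ s] =ᵐ[μ] M s := hM.condExp_ae_eq hsT
    calc ∫ ω, φ ω * M T ω ∂μ = ∫ ω, (μ[fun ω => φ ω * M T ω | ℱ s]) ω ∂μ :=
          (integral_condExp hm).symm
      _ = ∫ ω, φ ω * M s ω ∂μ := by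
          refine integral_congr_ae (h1.trans ?_)
          filter_upwards [h2] with ω hω
          simp [hω]
  -- ∫ φ * Z T ≤ ∫ φ * S
  have hZT : ∫ ω, φ ω * Z T ω ∂μ ≤ ∫ ω, φ ω * S ω ∂μ := by
    have h1 : μ[fun ω => φ ω * Z T ω | ℱ s] =ᵐ[μ] fun ω => φ ω * (μ[Z T | ℱ s]) ω :=
      condExp_stronglyMeasurable_mul_of_bound hm hφ (hZ.integrable T) c' hφbound
    have h2 : μ[fun ω => φ ω * S ω | ℱ s] =ᵐ[μ] fun ω => φ ω * (μ[S | ℱ s]) ω :=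
      condExp_stronglyMeasurable_mul_of_bound hm hφ hS c' hφbound
    have h3 : μ[Z T | ℱ s] ≤ᵐ[μ] μ[S | ℱ s] := by
      refine condExp_mono (hZ.integrable T) hS ?_
      filter_upwards [hbound] with ω hω
      exact (le_abs_self _).trans (hω T)
    calc ∫ ω, φ ω * Z T ω ∂μ = ∫ ω, (μ[fun ω => φ ω * Z T ω | ℱ s]) ω ∂μ :=
          (integral_condExp hm).symm
      _ ≤ ∫ ω, (μ[fun ω => φ ω * S ω | ℱ s]) ω ∂μ := by
          refine integral_mono_ae integrable_condExp integrable_condExp ?_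
          filter_upwards [h1, h2, h3] with ω h1ω h2ω h3ω
          rw [h1ω, h2ω]
          exact mul_le_mul_of_nonneg_left h3ω (hφ0 ω)
      _ = ∫ ω, φ ω * S ω ∂μ := integral_condExp hm
  -- -∫ φ * Z s ≤ ∫ φ * S
  have hZs : -∫ ω, φ ω * Z s ω ∂μ ≤ ∫ ω, φ ω * S ω ∂μ := by
    rw [← integral_neg]
    refine integral_mono_ae ((Iprod _ (hZ.integrable s)).neg) (Iprod _ hS) ?_
    filter_upwards [hbound] with ω hω
    have h4 : -Z s ω ≤ S ω := (neg_le_abs _).trans (hω s)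
    show -(φ ω * Z s ω) ≤ φ ω * S ω
    calc -(φ ω * Z s ω) = φ ω * (-Z s ω) := by ring
      _ ≤ φ ω * S ω := mul_le_mul_of_nonneg_left h4 (hφ0 ω)
  -- combine
  have hsplit : ∀ ω, φ ω * (A T ω - A s ω)
      = φ ω * Z T ω - φ ω * Z s ω - (φ ω * M T ω - φ ω * M s ω) := by
    intro ω
    rw [hdecomp T ω, hdecomp s ω] at *
    ring
  have hInt : ∫ ω, φ ω * (A T ω - A s ω) ∂μ
      = ∫ ω, φ ω * Z T ω ∂μ - ∫ ω, φ ω * Z s ω ∂μ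
        - (∫ ω, φ ω * M T ω ∂μ - ∫ ω, φ ω * M s ω ∂μ) := by
    rw [← integral_sub (Iprod _ (hM.integrable T)) (Iprod _ (hM.integrable s)),
      ← integral_sub (Iprod _ (hZ.integrable T)) (Iprod _ (hZ.integrable s)),
      ← integral_sub]
    · exact integral_congr_ae (Eventually.of_forall fun ω => hsplit ω)
    · exact (Iprod _ (hZ.integrable T)).sub (Iprod _ (hZ.integrable s))
    · exact (Iprod _ (hM.integrable T)).sub (Iprod _ (hM.integrable s))
  rw [hInt, hMT]
  have := hZT
  have := hZs
  linarith

lemma key_estimate {Ω : Type*} {m0 : MeasurableSpace Ω} (μ : Measure Ω) [IsProbabilityMeasure μ]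
    (ℱ : Filtration ℝ≥0 m0) (Z M A : ℝ≥0 → Ω → ℝ)
    (hZ : Submartingale Z ℱ μ) (hM : Martingale M ℱ μ)
    (hAcont : ∀ ω, Continuous fun t => A t ω)
    (hdecomp : ∀ t ω, Z t ω = M t ω + A t ω)
    (hA0 : ∀ ω, A 0 ω = 0) (hAmono : ∀ ω, Monotone fun t => A t ω)
    (S : Ω → ℝ) (hS : Integrable S μ)
    (hbound : ∀ᵐ ω ∂μ, ∀ t, |Z t ω| ≤ S ω)
    {p : ℝ} (hp : 1 < p) (c : ℝ) (hc : 0 ≤ c) (T : ℝ≥0) :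
    ∫ ω, min (A T ω) c ^ p ∂μ ≤ 2 * p * ∫ ω, S ω * min (A T ω) c ^ (p - 1) ∂μ := by
  have hp0 : (0:ℝ) < p := by linarith
  have hp1 : (0:ℝ) ≤ p - 1 := by linarith
  have hp1ne : p - 1 ≠ 0 := ne_of_gt (by linarith)
  -- basic facts about A
  have hAeq : ∀ t, A t = fun ω => Z t ω - M t ω := fun t => funext fun ω => by
    have := hdecomp t ω; linarith
  have hAadapted : ∀ t, StronglyMeasurable[ℱ t] (A t) := fun t => by
    rw [hAeq t]; exact (hZ.stronglyAdapted t).sub (hM.stronglyAdapted t)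
  have hAint : ∀ t, Integrable (A t) μ := fun t => by
    rw [hAeq t]; exact (hZ.integrable t).sub (hM.integrable t)
  have hAnn : ∀ t ω, 0 ≤ A t ω := fun t ω => by
    simpa [hA0 ω] using hAmono ω (zero_le : (0:ℝ≥0) ≤ t)
  set G : Ω → ℝ := fun ω => min (A T ω) c with hG
  have hGnn : ∀ ω, 0 ≤ G ω := fun ω => le_min (hAnn T ω) hc
  have hGle : ∀ ω, G ω ≤ c := fun ω => min_le_right _ _
  have hGmeas : Measurable G :=
    (((hAadapted T).mono (ℱ.le T)).measurable).min measurable_const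
  -- partition
  set pt : ℕ → ℕ → ℝ≥0 := fun n i => (i : ℝ≥0) * T * ((n : ℝ≥0))⁻¹ with hptdef
  have hpt0 : ∀ n, pt n 0 = 0 := fun n => by simp [hptdef]
  have hptmono : ∀ n, Monotone (pt n) := fun n i j hij =>
    mul_le_mul_left (mul_le_mul_left (by exact_mod_cast Nat.cast_le.2 hij) T) _
  have hptn : ∀ n, n ≠ 0 → pt n n = T := fun n hn => by
    have hn' : (n : ℝ≥0) ≠ 0 := Nat.cast_ne_zero.2 hn
    simp only [hptdef]; rw [mul_comm, ← mul_assoc, inv_mul_cancel₀ hn', one_mul]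
  have hptle : ∀ n i, i ≤ n → n ≠ 0 → pt n i ≤ T := fun n i hi hn =>
    (hptn n hn) ▸ hptmono n hi
  -- discrete truncated processes
  set aa : ℕ → ℕ → Ω → ℝ := fun n i ω => min (A (pt n (min i n)) ω) c with haadef
  set bb : ℕ → ℕ → Ω → ℝ := fun n i ω => aa n i ω ^ (p - 1) with hbbdef
  have haamono : ∀ n ω, Monotone (fun i => aa n i ω) := fun n ω i j hij =>
    min_le_min (hAmono ω (hptmono n (min_le_min hij le_rfl))) le_rfl
  have haa0 : ∀ n ω, aa n 0 ω = 0 := fun n ω => by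
    simp [haadef, hpt0, hA0 ω, min_eq_left hc]
  have haann : ∀ n i ω, 0 ≤ aa n i ω := fun n i ω => le_min (hAnn _ ω) hc
  have haale : ∀ n i ω, aa n i ω ≤ c := fun n i ω => min_le_right _ _
  have haaT : ∀ n, n ≠ 0 → ∀ ω, aa n n ω = G ω := fun n hn ω => by
    simp [haadef, min_self, hptn n hn, hG]
  have hbbnn : ∀ n i ω, 0 ≤ bb n i ω := fun n i ω => Real.rpow_nonneg (haann n i ω) _
  have hbble : ∀ n i ω, bb n i ω ≤ c ^ (p-1) := fun n i ω =>
    Real.rpow_le_rpow (haann n i ω) (haale n i ω) hp1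
  have hbbmono : ∀ n ω, Monotone fun i => bb n i ω := fun n ω i j hij =>
    Real.rpow_le_rpow (haann n i ω) (haamono n ω hij) hp1
  have hbb0 : ∀ n ω, bb n 0 ω = 0 := fun n ω => by
    rw [hbbdef]; simp only [haa0 n ω]; exact Real.zero_rpow hp1ne
  -- measurability
  have haam : ∀ n i, StronglyMeasurable[ℱ (pt n (min i n))] (aa n i) := fun n i =>
    ((hAadapted _).measurable.min measurable_const).stronglyMeasurable
  have hbbm : ∀ n i, StronglyMeasurable[ℱ (pt n (min i n))] (bb n i) := fun n i =>
    (((hAadapted _).measurable.min measurable_const).pow measurable_const).stronglyMeasurable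
  have haameas : ∀ n i, Measurable (aa n i) := fun n i => ((haam n i).mono (ℱ.le _)).measurable
  have hbbmeas : ∀ n i, Measurable (bb n i) := fun n i => (haameas n i).pow measurable_const
  set φf : ℕ → ℕ → Ω → ℝ := fun n i ω => bb n (i+1) ω - bb n i ω with hφfdef
  have hφ0 : ∀ n i ω, 0 ≤ φf n i ω := fun n i ω => sub_nonneg.2 (hbbmono n ω (Nat.le_succ i))
  have hφb : ∀ n i ω, φf n i ω ≤ c ^ (p-1) := fun n i ω => by
    have h1 := hbble n (i+1) ω
    have h2 := hbbnn n i ω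
    simp only [hφfdef]
    linarith
  have hφmeas : ∀ n i, Measurable (φf n i) := fun n i => (hbbmeas n (i+1)).sub (hbbmeas n i)
  have hφm : ∀ n i, StronglyMeasurable[ℱ (pt n (min (i+1) n))] (φf n i) := fun n i =>
    (hbbm n (i+1)).sub ((hbbm n i).mono (ℱ.mono (hptmono n (min_le_min (Nat.le_succ i) le_rfl))))
  -- bounded implies integrable
  have hbdd : ∀ (f : Ω → ℝ) (C : ℝ), Measurable f → (∀ ω, |f ω| ≤ C) → Integrable f μ := by
    intro f C hf hC
    exact (integrable_const C).mono' hf.aestronglyMeasurable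
      (Eventually.of_forall fun ω => by rw [Real.norm_eq_abs]; exact hC ω)
  -- error term
  set e : ℕ → Ω → ℝ := fun n ω => ∑ i ∈ range n, (aa n (i+1) ω - aa n i ω) * φf n i ω with hedef
  have hennn : ∀ n ω, 0 ≤ e n ω := fun n ω => Finset.sum_nonneg fun i _ =>
    mul_nonneg (sub_nonneg.2 (haamono n ω (Nat.le_succ i))) (hφ0 n i ω)
  have hφsum : ∀ n ω, ∑ i ∈ range n, φf n i ω = bb n n ω - bb n 0 ω := fun n ω =>
    Finset.sum_range_sub (fun i => bb n i ω) n
  have hele : ∀ n ω, e n ω ≤ c * c ^ (p-1) := by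
    intro n ω
    calc e n ω ≤ ∑ i ∈ range n, (aa n (i+1) ω - aa n i ω) * (c ^ (p-1)) :=
          Finset.sum_le_sum fun i _ => mul_le_mul_of_nonneg_left (hφb n i ω)
            (sub_nonneg.2 (haamono n ω (Nat.le_succ i)))
      _ = (aa n n ω - aa n 0 ω) * c ^ (p-1) := by
          rw [← Finset.sum_mul, Finset.sum_range_sub (fun i => aa n i ω)]
      _ ≤ c * c ^ (p-1) := by
          have h1 := haale n n ω
          have h2 := haann n 0 ω
          have h3 : 0 ≤ c ^ (p-1) := Real.rpow_nonneg hc _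
          nlinarith
  have hemeas : ∀ n, Measurable (e n) := fun n => by
    apply Finset.measurable_sum
    intro i _
    exact ((haameas n (i+1)).sub (haameas n i)).mul (hφmeas n i)
  -- main estimate for fixed n
  have main_n : ∀ n : ℕ, n ≠ 0 →
      ∫ ω, G ω ^ p ∂μ ≤ p * ∫ ω, e n ω ∂μ + 2 * p * ∫ ω, S ω * G ω ^ (p-1) ∂μ := by
    intro n hn
    have hgar : ∀ ω, G ω ^ p ≤ p * ∑ i ∈ range n, (G ω - aa n i ω) * φf n i ω := by
      intro ω
      have h := discrete_garsia (fun i => aa n i ω) (haa0 n ω) (haamono n ω) hp n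
      rw [haaT n hn ω] at h
      exact h
    have hterm_int : ∀ i ∈ range n, Integrable (fun ω => (G ω - aa n i ω) * φf n i ω) μ := by
      intro i _
      refine hbdd _ (c * c ^ (p-1)) ((hGmeas.sub (haameas n i)).mul (hφmeas n i)) fun ω => ?_
      rw [abs_mul]
      have h1 : |G ω - aa n i ω| ≤ c := by
        rw [abs_le]; constructor
        · have := hGnn ω; have := haale n i ω; linarith
        · have := hGle ω; have := haann n i ω; linarith
      have h2 : |φf n i ω| ≤ c ^ (p-1) := by
        rw [abs_of_nonneg (hφ0 n i ω)]; exact hφb n i ω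
      exact mul_le_mul h1 h2 (abs_nonneg _) hc
    have h1 : ∫ ω, G ω ^ p ∂μ ≤ ∫ ω, p * ∑ i ∈ range n, (G ω - aa n i ω) * φf n i ω ∂μ :=
      integral_mono_of_nonneg (Eventually.of_forall fun ω => Real.rpow_nonneg (hGnn ω) p)
        (((integrable_finset_sum _ hterm_int).const_mul p)) (Eventually.of_forall hgar)
    rw [integral_const_mul, integral_finset_sum _ hterm_int] at h1
    -- per-index bound
    have h2 : ∀ i ∈ range n, ∫ ω, (G ω - aa n i ω) * φf n i ω ∂μ ≤
        (∫ ω, (aa n (i+1) ω - aa n i ω) * φf n i ω ∂μ) + 2 * ∫ ω, φf n i ω * S ω ∂μ := by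
      intro i hi
      have hin : i < n := Finset.mem_range.1 hi
      have hmin1 : min (i+1) n = i + 1 := min_eq_left hin
      have hiT : pt n (i+1) ≤ T := hptle n (i+1) hin hn
      have haaclamp : ∀ ω, aa n (i+1) ω = min (A (pt n (i+1)) ω) c := fun ω => by
        rw [haadef]; simp only [hmin1]
      have hpw : ∀ ω, (G ω - aa n i ω) * φf n i ω ≤
          (aa n (i+1) ω - aa n i ω) * φf n i ω + φf n i ω * (A T ω - A (pt n (i+1)) ω) := by
        intro ω
        have hsub : G ω - aa n (i+1) ω ≤ A T ω - A (pt n (i+1)) ω := by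
          rw [haaclamp ω, hG]
          exact min_sub_min_le (hAmono ω hiT)
        have h3 : (G ω - aa n (i+1) ω) * φf n i ω ≤ φf n i ω * (A T ω - A (pt n (i+1)) ω) := by
          rw [mul_comm]
          exact mul_le_mul_of_nonneg_left hsub (hφ0 n i ω)
        calc (G ω - aa n i ω) * φf n i ω
            = (aa n (i+1) ω - aa n i ω) * φf n i ω + (G ω - aa n (i+1) ω) * φf n i ω := by ring
          _ ≤ _ := add_le_add_right h3 _
      have hφm' : StronglyMeasurable[ℱ (pt n (i+1))] (φf n i) := by
        have h := hφm n i
        rwa [hmin1] at h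
      have hcs := cond_step μ ℱ Z M A hZ hM hdecomp S hS hbound (pt n (i+1)) T hiT
        (φf n i) hφm' (hφ0 n i) (c ^ (p-1)) (hφb n i)
      have hint1 : Integrable (fun ω => (aa n (i+1) ω - aa n i ω) * φf n i ω) μ := by
        refine hbdd _ (c * c ^ (p-1)) (((haameas n (i+1)).sub (haameas n i)).mul (hφmeas n i))
          fun ω => ?_
        rw [abs_mul]
        have h1' : |aa n (i+1) ω - aa n i ω| ≤ c := by
          rw [abs_le]; constructor
          · have := haann n (i+1) ω; have := haale n i ω; linarith
          · have := haale n (i+1) ω; have := haann n i ω; linarith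
        have h2' : |φf n i ω| ≤ c ^ (p-1) := by
          rw [abs_of_nonneg (hφ0 n i ω)]; exact hφb n i ω
        exact mul_le_mul h1' h2' (abs_nonneg _) hc
      have hint2 : Integrable (fun ω => φf n i ω * (A T ω - A (pt n (i+1)) ω)) μ :=
        ((hAint T).sub (hAint _)).bdd_mul (hφmeas n i).aestronglyMeasurable
          (Eventually.of_forall fun ω => by rw [Real.norm_eq_abs, abs_of_nonneg (hφ0 n i ω)]; exact hφb n i ω)
      calc ∫ ω, (G ω - aa n i ω) * φf n i ω ∂μ
          ≤ ∫ ω, ((aa n (i+1) ω - aa n i ω) * φf n i ω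
              + φf n i ω * (A T ω - A (pt n (i+1)) ω)) ∂μ :=
            integral_mono (hterm_int i hi) (hint1.add hint2) hpw
        _ = (∫ ω, (aa n (i+1) ω - aa n i ω) * φf n i ω ∂μ)
              + ∫ ω, φf n i ω * (A T ω - A (pt n (i+1)) ω) ∂μ := integral_add hint1 hint2
        _ ≤ _ := by linarith [hcs]
    -- integrability for sums
    have hint1' : ∀ i ∈ range n, Integrable (fun ω => (aa n (i+1) ω - aa n i ω) * φf n i ω) μ := by
      intro i _
      refine hbdd _ (c * c ^ (p-1)) (((haameas n (i+1)).sub (haameas n i)).mul (hφmeas n i))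
        fun ω => ?_
      rw [abs_mul]
      have h1' : |aa n (i+1) ω - aa n i ω| ≤ c := by
        rw [abs_le]; constructor
        · have := haann n (i+1) ω; have := haale n i ω; linarith
        · have := haale n (i+1) ω; have := haann n i ω; linarith
      have h2' : |φf n i ω| ≤ c ^ (p-1) := by
        rw [abs_of_nonneg (hφ0 n i ω)]; exact hφb n i ω
      exact mul_le_mul h1' h2' (abs_nonneg _) hc
    have hintS : ∀ i ∈ range n, Integrable (fun ω => φf n i ω * S ω) μ := fun i _ =>
      hS.bdd_mul (hφmeas n i).aestronglyMeasurable
        (Eventually.of_forall fun ω => by rw [Real.norm_eq_abs, abs_of_nonneg (hφ0 n i ω)]; exact hφb n i ω)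
    have h5 : ∑ i ∈ range n, ∫ ω, (aa n (i+1) ω - aa n i ω) * φf n i ω ∂μ = ∫ ω, e n ω ∂μ :=
      (integral_finset_sum _ hint1').symm
    have h6 : ∑ i ∈ range n, ∫ ω, φf n i ω * S ω ∂μ = ∫ ω, S ω * G ω ^ (p-1) ∂μ := by
      rw [← integral_finset_sum _ hintS]
      refine integral_congr_ae (Eventually.of_forall fun ω => ?_)
      show ∑ i ∈ range n, φf n i ω * S ω = S ω * G ω ^ (p-1)
      have : ∑ i ∈ range n, φf n i ω * S ω = (∑ i ∈ range n, φf n i ω) * S ω :=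
        (Finset.sum_mul _ _ _).symm
      rw [this, hφsum n ω, hbb0 n ω, sub_zero]
      have hbbG : bb n n ω = G ω ^ (p-1) := by simp only [hbbdef]; rw [haaT n hn ω]
      rw [hbbG]; ring
    have h4 : ∑ i ∈ range n, ∫ ω, (G ω - aa n i ω) * φf n i ω ∂μ ≤
        ∫ ω, e n ω ∂μ + 2 * ∫ ω, S ω * G ω ^ (p-1) ∂μ := by
      calc ∑ i ∈ range n, ∫ ω, (G ω - aa n i ω) * φf n i ω ∂μ
          ≤ ∑ i ∈ range n, ((∫ ω, (aa n (i+1) ω - aa n i ω) * φf n i ω ∂μ)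
              + 2 * ∫ ω, φf n i ω * S ω ∂μ) := Finset.sum_le_sum h2
        _ = (∑ i ∈ range n, ∫ ω, (aa n (i+1) ω - aa n i ω) * φf n i ω ∂μ)
              + 2 * ∑ i ∈ range n, ∫ ω, φf n i ω * S ω ∂μ := by
            rw [Finset.sum_add_distrib, Finset.mul_sum]
        _ = _ := by rw [h5, h6]
    have h7 := mul_le_mul_of_nonneg_left h4 hp0.le
    have h8 : p * (∫ ω, e n ω ∂μ + 2 * ∫ ω, S ω * G ω ^ (p-1) ∂μ)
        = p * ∫ ω, e n ω ∂μ + 2 * p * ∫ ω, S ω * G ω ^ (p-1) ∂μ := by ring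
    exact h1.trans (h8 ▸ h7)
  -- pointwise convergence of the error term
  have hptwise : ∀ ω, Tendsto (fun n => e n ω) atTop (𝓝 0) := by
    intro ω
    rw [Metric.tendsto_atTop]
    intro ε hε
    have hUC := (isCompact_Icc (a := (0:ℝ≥0)) (b := T)).uniformContinuousOn_of_continuous
      ((hAcont ω).continuousOn)
    have hXnn : (0:ℝ) ≤ c ^ (p-1) := Real.rpow_nonneg hc _
    have hε' : 0 < ε / (c ^ (p-1) + 1) := div_pos hε (by linarith)
    obtain ⟨δ, hδpos, hδ⟩ := Metric.uniformContinuousOn_iff.1 hUC _ hε'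
    refine ⟨⌈(T:ℝ)/δ⌉₊ + 1, fun n hn => ?_⟩
    have hn0 : n ≠ 0 := by omega
    have hnpos : (0:ℝ) < n := by
      have : 0 < n := Nat.pos_of_ne_zero hn0
      exact_mod_cast this
    have hTn : (T:ℝ)/n < δ := by
      have h2 : (T:ℝ)/δ ≤ ⌈(T:ℝ)/δ⌉₊ := Nat.le_ceil _
      have h3 : ((⌈(T:ℝ)/δ⌉₊ : ℕ) : ℝ) < n := by
        have : ⌈(T:ℝ)/δ⌉₊ < n := by omega
        exact_mod_cast this
      have h1 : (T:ℝ)/δ < n := lt_of_le_of_lt h2 h3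
      rw [div_lt_iff₀ hδpos] at h1
      rw [div_lt_iff₀ hnpos]
      linarith
    have hgap : ∀ i : ℕ, dist (pt n (i+1)) (pt n i) < δ := by
      intro i
      rw [NNReal.dist_eq]
      have e1 : ((pt n (i+1) : ℝ≥0) : ℝ) = ((i:ℝ)+1) * (T:ℝ) * ((n:ℝ))⁻¹ := by
        simp [hptdef]
      have e2 : ((pt n i : ℝ≥0) : ℝ) = (i:ℝ) * (T:ℝ) * ((n:ℝ))⁻¹ := by
        simp [hptdef]
      rw [e1, e2]
      have e3 : ((i:ℝ)+1) * (T:ℝ) * ((n:ℝ))⁻¹ - (i:ℝ) * (T:ℝ) * ((n:ℝ))⁻¹ = (T:ℝ)/n := by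
        field_simp
        ring
      rw [e3, abs_of_nonneg (by positivity)]
      exact hTn
    have hinc : ∀ i, i < n → aa n (i+1) ω - aa n i ω ≤ ε / (c ^ (p-1) + 1) := by
      intro i hin
      have hmin1 : min (i+1) n = i+1 := min_eq_left hin
      have hmini : min i n = i := min_eq_left hin.le
      have hA1 : aa n (i+1) ω - aa n i ω ≤ A (pt n (i+1)) ω - A (pt n i) ω := by
        simp only [haadef, hmin1, hmini]
        exact min_sub_min_le (hAmono ω (hptmono n (Nat.le_succ i)))
      have hd := hδ (pt n (i+1)) ⟨zero_le, hptle n (i+1) hin hn0⟩ (pt n i)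
        ⟨zero_le, hptle n i (le_of_lt hin) hn0⟩ (hgap i)
      rw [Real.dist_eq] at hd
      have habs := abs_lt.1 hd
      have hle1 : A (pt n (i+1)) ω - A (pt n i) ω < ε / (c ^ (p-1) + 1) := habs.2
      linarith
    have hlt : e n ω < ε := by
      calc e n ω ≤ ∑ i ∈ range n, (ε / (c ^ (p-1) + 1)) * φf n i ω :=
            Finset.sum_le_sum fun i hi => by
              rw [mul_comm (aa n (i+1) ω - aa n i ω) (φf n i ω),
                mul_comm (ε / (c ^ (p-1) + 1)) (φf n i ω)]
              exact mul_le_mul_of_nonneg_left (hinc i (Finset.mem_range.1 hi)) (hφ0 n i ω)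
        _ = (ε / (c ^ (p-1) + 1)) * (bb n n ω - bb n 0 ω) := by
            rw [← Finset.mul_sum, hφsum]
        _ ≤ (ε / (c ^ (p-1) + 1)) * (c ^ (p-1)) := by
            rw [hbb0 n ω, sub_zero]
            exact mul_le_mul_of_nonneg_left (hbble n n ω) hε'.le
        _ < ε := by
            rw [div_mul_eq_mul_div, div_lt_iff₀ (by linarith)]
            nlinarith
    rw [Real.dist_eq, sub_zero, abs_of_nonneg (hennn n ω)]
    exact hlt
  -- dominated convergence
  have hElim : Tendsto (fun n => ∫ ω, e n ω ∂μ) atTop (𝓝 0) := by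
    have h := tendsto_integral_of_dominated_convergence (μ := μ) (F := fun n => e n)
      (f := fun _ => (0:ℝ)) (fun _ => c * c ^ (p-1))
      (fun n => (hemeas n).aestronglyMeasurable) (integrable_const _)
      (fun n => Eventually.of_forall fun ω => by
        rw [Real.norm_eq_abs, abs_of_nonneg (hennn n ω)]
        exact hele n ω)
      (Eventually.of_forall fun ω => hptwise ω)
    simpa using h
  -- conclude
  have hbase : ∀ᶠ n in atTop,
      ∫ ω, G ω ^ p ∂μ ≤ p * ∫ ω, e n ω ∂μ + 2 * p * ∫ ω, S ω * G ω ^ (p-1) ∂μ := by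
    filter_upwards [eventually_ge_atTop 1] with n hn
    exact main_n n (by omega)
  have hlim2 : Tendsto (fun n => p * ∫ ω, e n ω ∂μ + 2 * p * ∫ ω, S ω * G ω ^ (p-1) ∂μ) atTop
      (𝓝 (p * 0 + 2 * p * ∫ ω, S ω * G ω ^ (p-1) ∂μ)) :=
    (hElim.const_mul p).add tendsto_const_nhds
  have hfin := ge_of_tendsto hlim2 hbase
  simpa using hfin

lemma div_trick {L K C : ℝ≥0∞} {p q : ℝ} (hp : 1 < p) (hpq : p.HolderConjugate q)
    (hL : L ≠ ⊤) (h : L ≤ C * (K ^ (1/p) * L ^ (1/q))) : L ≤ C ^ p * K := by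
  have hp0 : (0:ℝ) < p := by linarith
  rcases eq_or_ne L 0 with h0 | h0
  · simp [h0]
  · have hq1 : 1 < q := hpq.symm.lt
    have hLq_pos : 0 < L ^ (1/q) := ENNReal.rpow_pos (pos_iff_ne_zero.2 h0) hL
    have hLq_ne_top : L ^ (1/q) ≠ ⊤ := ENNReal.rpow_ne_top_of_nonneg (by positivity) hL
    have hsplit : L = L ^ (1/p) * L ^ (1/q) := by
      rw [← ENNReal.rpow_add _ _ h0 hL,
        show 1/p + 1/q = 1 by rw [one_div, one_div]; exact hpq.inv_add_inv_eq_one,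
        ENNReal.rpow_one]
    have h2 : L ^ (1/p) * L ^ (1/q) ≤ (C * K ^ (1/p)) * L ^ (1/q) := by
      rw [mul_assoc]
      exact hsplit ▸ h
    have hmain : L ^ (1/p) ≤ C * K ^ (1/p) :=
      (ENNReal.mul_le_mul_iff_left hLq_pos.ne' hLq_ne_top).1 h2
    have h3 : L = (L ^ (1/p)) ^ p := by
      rw [← ENNReal.rpow_mul, one_div, inv_mul_cancel₀ (ne_of_gt hp0), ENNReal.rpow_one]
    rw [h3]
    calc (L ^ (1/p)) ^ p ≤ (C * K ^ (1/p)) ^ p := ENNReal.rpow_le_rpow hmain hp0.le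
      _ = C ^ p * (K ^ (1/p)) ^ p := ENNReal.mul_rpow_of_nonneg _ _ hp0.le
      _ = C ^ p * K := by
          rw [← ENNReal.rpow_mul, one_div, inv_mul_cancel₀ (ne_of_gt hp0), ENNReal.rpow_one]

lemma holder_step {Ω : Type*} {m0 : MeasurableSpace Ω} (μ : Measure Ω) [IsProbabilityMeasure μ]
    (G S : Ω → ℝ) {p c : ℝ} (hp : 1 < p) (hc : 0 ≤ c)
    (hGmeas : Measurable G) (hGnn : ∀ ω, 0 ≤ G ω) (hGle : ∀ ω, G ω ≤ c)
    (hS : Integrable S μ) (hSnn : 0 ≤ᵐ[μ] S)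
    (h : ∫ ω, G ω ^ p ∂μ ≤ 2 * p * ∫ ω, S ω * G ω ^ (p-1) ∂μ) :
    ∫⁻ ω, ENNReal.ofReal (G ω) ^ p ∂μ
      ≤ ENNReal.ofReal ((2*p)^p) * ∫⁻ ω, ENNReal.ofReal (S ω) ^ p ∂μ := by
  have hp0 : (0:ℝ) < p := by linarith
  have hp1 : (0:ℝ) ≤ p - 1 := by linarith
  set L := ∫⁻ ω, ENNReal.ofReal (G ω) ^ p ∂μ with hL
  set K := ∫⁻ ω, ENNReal.ofReal (S ω) ^ p ∂μ with hK
  -- L is finite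
  have hLfin : L ≠ ⊤ := by
    have hle : L ≤ ENNReal.ofReal (c ^ p) := by
      rw [hL]
      calc ∫⁻ ω, ENNReal.ofReal (G ω) ^ p ∂μ ≤ ∫⁻ _, ENNReal.ofReal (c ^ p) ∂μ := by
            apply lintegral_mono
            intro ω
            show ENNReal.ofReal (G ω) ^ p ≤ ENNReal.ofReal (c ^ p)
            rw [ENNReal.ofReal_rpow_of_nonneg (hGnn ω) hp0.le]
            exact ENNReal.ofReal_le_ofReal (Real.rpow_le_rpow (hGnn ω) (hGle ω) hp0.le)
        _ = ENNReal.ofReal (c ^ p) := by simp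
    exact ne_top_of_le_ne_top ENNReal.ofReal_ne_top hle
  -- integrability of the pieces
  have hGp_int : Integrable (fun ω => G ω ^ p) μ := by
    refine (integrable_const (c ^ p)).mono' (hGmeas.pow measurable_const).aestronglyMeasurable
      (Eventually.of_forall fun ω => ?_)
    rw [Real.norm_eq_abs, abs_of_nonneg (Real.rpow_nonneg (hGnn ω) p)]
    exact Real.rpow_le_rpow (hGnn ω) (hGle ω) hp0.le
  have hSG_int : Integrable (fun ω => S ω * G ω ^ (p-1)) μ := by
    have h1 : (fun ω => S ω * G ω ^ (p-1)) = fun ω => (G ω ^ (p-1)) * S ω :=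
      funext fun ω => mul_comm _ _
    rw [h1]
    refine hS.bdd_mul (hGmeas.pow measurable_const).aestronglyMeasurable (c := c ^ (p-1)) (Eventually.of_forall fun ω => ?_)
    rw [Real.norm_eq_abs, abs_of_nonneg (Real.rpow_nonneg (hGnn ω) _)]
    exact Real.rpow_le_rpow (hGnn ω) (hGle ω) hp1
  -- convert to lintegrals
  have hA : L = ENNReal.ofReal (∫ ω, G ω ^ p ∂μ) := by
    rw [ofReal_integral_eq_lintegral_ofReal hGp_int
      (Eventually.of_forall fun ω => Real.rpow_nonneg (hGnn ω) p), hL]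
    apply lintegral_congr
    intro ω
    rw [ENNReal.ofReal_rpow_of_nonneg (hGnn ω) hp0.le]
  have hB : ENNReal.ofReal (∫ ω, S ω * G ω ^ (p-1) ∂μ)
      = ∫⁻ ω, ENNReal.ofReal (S ω) * ENNReal.ofReal (G ω) ^ (p-1) ∂μ := by
    rw [ofReal_integral_eq_lintegral_ofReal hSG_int ?_]
    · apply lintegral_congr_ae
      filter_upwards [hSnn] with ω hω
      rw [ENNReal.ofReal_mul hω, ENNReal.ofReal_rpow_of_nonneg (hGnn ω) hp1]
    · filter_upwards [hSnn] with ω hω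
      exact mul_nonneg hω (Real.rpow_nonneg (hGnn ω) _)
  -- apply Hölder
  have hpq : p.HolderConjugate p.conjExponent := Real.HolderConjugate.conjExponent hp
  set q := p.conjExponent with hq
  have hSmeas : AEMeasurable (fun ω => ENNReal.ofReal (S ω)) μ :=
    ENNReal.measurable_ofReal.comp_aemeasurable hS.aestronglyMeasurable.aemeasurable
  have hGmeas' : AEMeasurable (fun ω => ENNReal.ofReal (G ω) ^ (p-1)) μ :=
    (ENNReal.measurable_ofReal.comp hGmeas).pow_const _ |>.aemeasurable
  have hHolder := ENNReal.lintegral_mul_le_Lp_mul_Lq μ hpq hSmeas hGmeas'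
  have hq_exp : ∀ ω, (ENNReal.ofReal (G ω) ^ (p-1)) ^ q = ENNReal.ofReal (G ω) ^ p := by
    intro ω
    rw [← ENNReal.rpow_mul]
    congr 1
    rw [hq, Real.conjExponent]
    have hp1ne : p - 1 ≠ 0 := by
      have : (1:ℝ) < p := hp
      intro hcon
      rw [sub_eq_zero] at hcon
      exact absurd hcon.symm (ne_of_lt this)
    field_simp
  have hHolder' : ∫⁻ ω, ENNReal.ofReal (S ω) * ENNReal.ofReal (G ω) ^ (p-1) ∂μ
      ≤ K ^ (1/p) * L ^ (1/q) := by
    refine le_trans hHolder ?_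
    apply mul_le_mul'
    · exact le_rfl
    · apply ENNReal.rpow_le_rpow _ (one_div_nonneg.2 hpq.symm.pos.le)
      apply le_of_eq
      apply lintegral_congr
      intro ω
      exact hq_exp ω
  -- combine
  have hcomb : L ≤ ENNReal.ofReal (2*p) * (K ^ (1/p) * L ^ (1/q)) := by
    calc L = ENNReal.ofReal (∫ ω, G ω ^ p ∂μ) := hA
      _ ≤ ENNReal.ofReal (2 * p * ∫ ω, S ω * G ω ^ (p-1) ∂μ) := ENNReal.ofReal_le_ofReal h
      _ = ENNReal.ofReal (2*p) * ENNReal.ofReal (∫ ω, S ω * G ω ^ (p-1) ∂μ) := by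
          rw [ENNReal.ofReal_mul (by linarith)]
      _ = ENNReal.ofReal (2*p) * ∫⁻ ω, ENNReal.ofReal (S ω) * ENNReal.ofReal (G ω) ^ (p-1) ∂μ := by
          rw [hB]
      _ ≤ ENNReal.ofReal (2*p) * (K ^ (1/p) * L ^ (1/q)) :=
          mul_le_mul' le_rfl hHolder'
  have := div_trick hp hpq hLfin hcomb
  calc L ≤ ENNReal.ofReal (2*p) ^ p * K := this
    _ = ENNReal.ofReal ((2*p)^p) * K := by
        rw [ENNReal.ofReal_rpow_of_nonneg (by linarith) hp0.le]

/-- Lenglart–Lépingle–Pratelli inequality: let `(Z_t)_{t≥0}` be a continuous submartingale with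
Doob–Meyer decomposition `Z = M + A`, `M` a continuous martingale with `M_0 = 0`, `A` a
continuous increasing process with `A_0 = 0` and `A_∞ = lim_{t→∞} A_t`.  Then for every `p > 1`,
`E[A_∞^p] ≤ (2p)^p E[sup_{t≥0} |Z_t|^p]`. -/
theorem stmt14 {Ω : Type*} {m0 : MeasurableSpace Ω} (μ : Measure Ω) [IsProbabilityMeasure μ]
    (ℱ : Filtration ℝ≥0 m0)
    (Z M A : ℝ≥0 → Ω → ℝ)
    (hZ : Submartingale Z ℱ μ)
    (hM : Martingale M ℱ μ)
    (hZcont : ∀ ω, Continuous fun t => Z t ω)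
    (hMcont : ∀ ω, Continuous fun t => M t ω)
    (hAcont : ∀ ω, Continuous fun t => A t ω)
    (hdecomp : ∀ t ω, Z t ω = M t ω + A t ω)
    (hM0 : ∀ ω, M 0 ω = 0) (hA0 : ∀ ω, A 0 ω = 0)
    (hAmono : ∀ ω, Monotone fun t => A t ω)
    (Ainf : Ω → ℝ)
    (hAinf : ∀ ω, Tendsto (fun t => A t ω) atTop (𝓝 (Ainf ω)))
    (p : ℝ) (hp : 1 < p) :
    (∫⁻ ω, ENNReal.ofReal (Ainf ω) ^ p ∂μ) ≤
      ENNReal.ofReal ((2 * p) ^ p) * ∫⁻ ω, (⨆ t, ENNReal.ofReal |Z t ω|) ^ p ∂μ := by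
  have hp0 : (0:ℝ) < p := by linarith
  set g : Ω → ℝ≥0∞ := fun ω => ⨆ t, ENNReal.ofReal |Z t ω| with hgdef
  by_cases hfin : ∫⁻ ω, g ω ^ p ∂μ = ⊤
  · rw [hfin, ENNReal.mul_top]
    · exact le_top
    · rw [Ne, ENNReal.ofReal_eq_zero, not_le]
      exact Real.rpow_pos_of_pos (by linarith) p
  -- main case
  have hZmeas : ∀ t, Measurable (Z t) := fun t => ((hZ.stronglyAdapted t).mono (ℱ.le t)).measurable
  have hgeq : g = fun ω => ⨆ q : ℚ, ENNReal.ofReal |Z (Real.toNNReal q) ω| :=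
    funext fun ω => sup_eq_rat_sup (fun t => Z t ω) (hZcont ω)
  have hgmeas : Measurable g := by
    rw [hgeq]
    exact Measurable.iSup fun q => ((hZmeas _).abs).ennreal_ofReal
  have hgae : ∀ᵐ ω ∂μ, g ω ≠ ⊤ := by
    have h1 : ∀ᵐ ω ∂μ, g ω ^ p < ⊤ := ae_lt_top (hgmeas.pow_const p) hfin
    filter_upwards [h1] with ω hω
    exact ((ENNReal.rpow_lt_top_iff_of_pos hp0).1 hω).ne
  set S : Ω → ℝ := fun ω => (g ω).toReal with hSdef
  have hSmeas : Measurable S := hgmeas.ennreal_toReal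
  have hSnn : ∀ ω, 0 ≤ S ω := fun ω => ENNReal.toReal_nonneg
  have hSnnae : 0 ≤ᵐ[μ] S := Eventually.of_forall hSnn
  have hbound : ∀ᵐ ω ∂μ, ∀ t, |Z t ω| ≤ S ω := by
    filter_upwards [hgae] with ω hω t
    have h1 : ENNReal.ofReal |Z t ω| ≤ g ω := le_iSup (fun t => ENNReal.ofReal |Z t ω|) t
    have h2 := ENNReal.toReal_mono hω h1
    rwa [ENNReal.toReal_ofReal (abs_nonneg _)] at h2
  have hSg : ∫⁻ ω, ENNReal.ofReal (S ω) ^ p ∂μ = ∫⁻ ω, g ω ^ p ∂μ := by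
    apply lintegral_congr_ae
    filter_upwards [hgae] with ω hω
    rw [hSdef]
    simp only [ENNReal.ofReal_toReal hω]
  have hSint : Integrable S μ := by
    refine ⟨hSmeas.aestronglyMeasurable, ?_⟩
    rw [hasFiniteIntegral_iff_ofReal hSnnae]
    calc ∫⁻ ω, ENNReal.ofReal (S ω) ∂μ
        ≤ ∫⁻ ω, 1 + ENNReal.ofReal (S ω) ^ p ∂μ := by
          apply lintegral_mono
          intro ω
          rcases le_total (ENNReal.ofReal (S ω)) 1 with h | h
          · exact h.trans (le_add_of_nonneg_right zero_le)
          · have : ENNReal.ofReal (S ω) = ENNReal.ofReal (S ω) ^ (1:ℝ) := by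
              rw [ENNReal.rpow_one]
            calc ENNReal.ofReal (S ω) = ENNReal.ofReal (S ω) ^ (1:ℝ) := by rw [ENNReal.rpow_one]
              _ ≤ ENNReal.ofReal (S ω) ^ p := ENNReal.rpow_le_rpow_of_exponent_le h hp.le
              _ ≤ 1 + ENNReal.ofReal (S ω) ^ p := le_add_of_nonneg_left zero_le
      _ = 1 * μ Set.univ + ∫⁻ ω, ENNReal.ofReal (S ω) ^ p ∂μ := by
          rw [lintegral_add_left measurable_const, lintegral_const]
      _ < ⊤ := by
          rw [hSg]
          simp only [one_mul, measure_univ, mul_one]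
          exact ENNReal.add_lt_top.2 ⟨ENNReal.one_lt_top, lt_top_iff_ne_top.2 hfin⟩
  -- measurability of A
  have hAmeas : ∀ t, Measurable (A t) := by
    intro t
    have hAeq : A t = fun ω => Z t ω - M t ω := funext fun ω => by
      have := hdecomp t ω; linarith
    rw [hAeq]
    exact (hZmeas t).sub ((hM.stronglyAdapted t).mono (ℱ.le t)).measurable
  have hAnn : ∀ t ω, 0 ≤ A t ω := fun t ω => by
    simpa [hA0 ω] using hAmono ω (zero_le : (0:ℝ≥0) ≤ t)
  set K := ∫⁻ ω, ENNReal.ofReal (S ω) ^ p ∂μ with hK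
  -- fixed-horizon truncated bound
  have hTc : ∀ (N k : ℕ),
      ∫⁻ ω, ENNReal.ofReal (min (A (N : ℝ≥0) ω) (k:ℝ)) ^ p ∂μ
        ≤ ENNReal.ofReal ((2*p)^p) * K := by
    intro N k
    have hKE := key_estimate μ ℱ Z M A hZ hM hAcont hdecomp hA0 hAmono S hSint hbound hp
      (k:ℝ) (Nat.cast_nonneg k) (N : ℝ≥0)
    exact holder_step μ (fun ω => min (A (N:ℝ≥0) ω) (k:ℝ)) S hp (Nat.cast_nonneg k)
      ((hAmeas _).min measurable_const) (fun ω => le_min (hAnn _ ω) (Nat.cast_nonneg k))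
      (fun ω => min_le_right _ _) hSint hSnnae hKE
  -- monotone convergence in k
  have hT : ∀ (N : ℕ),
      ∫⁻ ω, ENNReal.ofReal (A (N : ℝ≥0) ω) ^ p ∂μ ≤ ENNReal.ofReal ((2*p)^p) * K := by
    intro N
    have hmono : Monotone (fun k : ℕ => fun ω =>
        ENNReal.ofReal (min (A (N:ℝ≥0) ω) (k:ℝ)) ^ p) := by
      intro k l hkl ω
      apply ENNReal.rpow_le_rpow _ hp0.le
      apply ENNReal.ofReal_le_ofReal
      exact min_le_min le_rfl (by exact_mod_cast hkl)
    have hmeask : ∀ k : ℕ, Measurable (fun ω =>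
        ENNReal.ofReal (min (A (N:ℝ≥0) ω) (k:ℝ)) ^ p) := fun k =>
      (((hAmeas _).min measurable_const).ennreal_ofReal).pow_const _
    have hsup : ∀ ω, ⨆ k : ℕ, ENNReal.ofReal (min (A (N:ℝ≥0) ω) (k:ℝ)) ^ p
        = ENNReal.ofReal (A (N:ℝ≥0) ω) ^ p := by
      intro ω
      apply le_antisymm
      · refine iSup_le fun k => ?_
        apply ENNReal.rpow_le_rpow _ hp0.le
        exact ENNReal.ofReal_le_ofReal (min_le_left _ _)
      · have hk0 : min (A (N:ℝ≥0) ω) ((⌈A (N:ℝ≥0) ω⌉₊ : ℝ)) = A (N:ℝ≥0) ω :=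
          min_eq_left (Nat.le_ceil _)
        calc ENNReal.ofReal (A (N:ℝ≥0) ω) ^ p
            = ENNReal.ofReal (min (A (N:ℝ≥0) ω) ((⌈A (N:ℝ≥0) ω⌉₊ : ℝ))) ^ p := by rw [hk0]
          _ ≤ _ := le_iSup (fun k : ℕ => ENNReal.ofReal (min (A (N:ℝ≥0) ω) ((k:ℕ):ℝ)) ^ p) _
    calc ∫⁻ ω, ENNReal.ofReal (A (N : ℝ≥0) ω) ^ p ∂μ
        = ∫⁻ ω, ⨆ k : ℕ, ENNReal.ofReal (min (A (N:ℝ≥0) ω) (k:ℝ)) ^ p ∂μ := by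
          apply lintegral_congr
          intro ω
          rw [hsup ω]
      _ = ⨆ k : ℕ, ∫⁻ ω, ENNReal.ofReal (min (A (N:ℝ≥0) ω) (k:ℝ)) ^ p ∂μ :=
          lintegral_iSup hmeask hmono
      _ ≤ ENNReal.ofReal ((2*p)^p) * K := iSup_le fun k => hTc N k
  -- monotone convergence in N
  have hmonoN : Monotone (fun N : ℕ => fun ω => ENNReal.ofReal (A (N:ℝ≥0) ω) ^ p) := by
    intro N N' hNN' ω
    apply ENNReal.rpow_le_rpow _ hp0.le
    exact ENNReal.ofReal_le_ofReal (hAmono ω (by exact_mod_cast hNN'))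
  have hmeasN : ∀ N : ℕ, Measurable (fun ω => ENNReal.ofReal (A (N:ℝ≥0) ω) ^ p) := fun N =>
    ((hAmeas _).ennreal_ofReal).pow_const _
  have hsupN : ∀ ω, ⨆ N : ℕ, ENNReal.ofReal (A (N:ℝ≥0) ω) ^ p
      = ENNReal.ofReal (Ainf ω) ^ p := by
    intro ω
    have htend : Tendsto (fun N : ℕ => A (N:ℝ≥0) ω) atTop (𝓝 (Ainf ω)) :=
      (hAinf ω).comp tendsto_natCast_atTop_atTop
    have htend2 : Tendsto (fun N : ℕ => ENNReal.ofReal (A (N:ℝ≥0) ω) ^ p) atTop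
        (𝓝 (ENNReal.ofReal (Ainf ω) ^ p)) :=
      ((ENNReal.continuous_rpow_const.comp ENNReal.continuous_ofReal).tendsto _).comp htend
    have hmono' : Monotone (fun N : ℕ => ENNReal.ofReal (A (N:ℝ≥0) ω) ^ p) := by
      intro N N' h
      exact hmonoN h ω
    exact tendsto_nhds_unique (tendsto_atTop_iSup hmono') htend2
  calc ∫⁻ ω, ENNReal.ofReal (Ainf ω) ^ p ∂μ
      = ∫⁻ ω, ⨆ N : ℕ, ENNReal.ofReal (A (N:ℝ≥0) ω) ^ p ∂μ := by
        apply lintegral_congr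
        intro ω
        rw [hsupN ω]
    _ = ⨆ N : ℕ, ∫⁻ ω, ENNReal.ofReal (A (N:ℝ≥0) ω) ^ p ∂μ := lintegral_iSup hmeasN hmonoN
    _ ≤ ENNReal.ofReal ((2*p)^p) * K := iSup_le hT
    _ = ENNReal.ofReal ((2 * p) ^ p) * ∫⁻ ω, g ω ^ p ∂μ := by rw [hSg]
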